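/- Let p, q be integers with 0 < q < p and gcd(p,q) = 1, let p/q = [a₁, …, a_m] be the continued fraction expansion produced by the Euclidean algorithm, and let ψ_{p,q} ∈ G be a^{a₁}·b^{-a₂}·a^{a₃}·⋯·a^{a_m} if m is odd and a^{a₁}·b^{-a₂}·⋯·b^{-a_m}·b·a·b if m is even. Then for every ψ ∈ G such that the matrix Ω(ψ) has top-left entry q and bottom-left entry p, there exist an integer cₒ and elements ψ', ψ'' in the kernel of Ω such that ψ·b^{-cₒ} = ψ'·ψ_{p,q} and ψ·b^{-cₒ} = ψ_{p,q}·ψ''. -/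

import Mathlib

/-- `SL2Z` is the group of 2×2 integer matrices of determinant 1. -/
abbrev SL2Z := Matrix.SpecialLinearGroup (Fin 2) ℤ

/-- The matrix A = [[1,0],[1,1]]. -/
def matA : SL2Z := ⟨!![1, 0; 1, 1], by norm_num [Matrix.det_fin_two_of]⟩

/-- The matrix B = [[1,-1],[0,1]]. -/
def matB : SL2Z := ⟨!![1, -1; 0, 1], by norm_num [Matrix.det_fin_two_of]⟩

/-- The four relators of the presentation of `PMCG₂(T)`:
`a·b·a·b⁻¹·a⁻¹·b⁻¹`, `a·c·a·c⁻¹·a⁻¹·c⁻¹`, `b·c·b⁻¹·c⁻¹`, `(a·b·c)⁴`,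
where `a, b, c` are the generators `0, 1, 2`. -/
def pmcgRels : Set (FreeGroup (Fin 3)) :=
  { FreeGroup.of 0 * FreeGroup.of 1 * FreeGroup.of 0 *
      (FreeGroup.of 1)⁻¹ * (FreeGroup.of 0)⁻¹ * (FreeGroup.of 1)⁻¹,
    FreeGroup.of 0 * FreeGroup.of 2 * FreeGroup.of 0 *
      (FreeGroup.of 2)⁻¹ * (FreeGroup.of 0)⁻¹ * (FreeGroup.of 2)⁻¹,
    FreeGroup.of 1 * FreeGroup.of 2 * (FreeGroup.of 1)⁻¹ * (FreeGroup.of 2)⁻¹,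
    (FreeGroup.of 0 * FreeGroup.of 1 * FreeGroup.of 2) ^ 4 }

/-- `G = ⟨a, b, c | a·b·a = b·a·b, a·c·a = c·a·c, b·c = c·b, (a·b·c)⁴ = 1⟩`,
a presentation of `PMCG₂(T)`. -/
abbrev G := PresentedGroup pmcgRels

/-- The generator `a` (the Dehn twist `t_α`). -/
def ga : G := PresentedGroup.of 0
/-- The generator `b` (the Dehn twist `t_β`). -/
def gb : G := PresentedGroup.of 1
/-- The generator `c` (the Dehn twist `t_γ`). -/
def gc : G := PresentedGroup.of 2

/-- The continued fraction `[a₁, …, a_m] = a₁ + 1/(a₂ + 1/(⋯ + 1/a_m))` of a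
list of (positive) integers, as a rational number. -/
def cf : List ℤ → ℚ
  | [] => 0
  | x :: l => x + (cf l)⁻¹

/-- The alternating product `a^{a₁}·b^{-a₂}·a^{a₃}·⋯` in `G` (factor `a^{aᵢ}`
for odd `i`, factor `b^{-aᵢ}` for even `i`, starting with `a` when the flag
is `false`). -/
def altG : Bool → List ℤ → G
  | _, [] => 1
  | false, x :: l => ga ^ x * altG true l
  | true, x :: l => gb ^ (-x) * altG false l

/-- The element `ψ_{p,q} ∈ G` associated with the continued fraction
expansion `p/q = [a₁, …, a_m]`: it equals `a^{a₁}·b^{-a₂}·⋯·a^{a_m}` if `m`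
is odd, and `a^{a₁}·b^{-a₂}·⋯·b^{-a_m}·b·a·b` if `m` is even. -/
def ψpq (L : List ℤ) : G :=
  if Odd L.length then altG false L else altG false L * (gb * ga * gb)

/-!
The continued-fraction recurrence shows that the first column of `Ω ψ_{p,q}` is `(q, p)`. Two
matrices of `SL(2, ℤ)` with the same first column differ on the right by a power of
`T = Ω(b)⁻¹`, so `Ω (ψ · b^{-c₀}) = Ω ψ_{p,q}` for a suitable `c₀`, and elements with the same
image differ by an element of the kernel on either side.
-/

open ModularGroup Matrix.SpecialLinearGroup
open scoped Matrix

lemma matB_eq_T_inv : matB = T⁻¹ := by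
  ext i j; fin_cases i <;> fin_cases j <;> simp [matB]

lemma matA_eq_S_mul_T_inv_mul_S_inv : matA = S * T⁻¹ * S⁻¹ := by
  ext i j; fin_cases i <;> fin_cases j <;> simp [matA, S_inv]

lemma coe_matA_zpow (n : ℤ) :
    ((matA ^ n : SL2Z) : Matrix (Fin 2) (Fin 2) ℤ) = !![1, 0; n, 1] := by
  rw [matA_eq_S_mul_T_inv_mul_S_inv, conj_zpow, inv_zpow', S_inv]
  simp [coe_T_zpow]

lemma coe_matB_zpow (n : ℤ) :
    ((matB ^ n : SL2Z) : Matrix (Fin 2) (Fin 2) ℤ) = !![1, -n; 0, 1] := by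
  rw [matB_eq_T_inv, inv_zpow', coe_T_zpow]

/-- Numerator and denominator of `cf L` by the usual recurrence, the empty expansion standing
for `1/0` (whereas `cf [] = 0`). -/
def cfNumDen : List ℤ → ℤ × ℤ
  | [] => (1, 0)
  | x :: l => (x * (cfNumDen l).1 + (cfNumDen l).2, (cfNumDen l).1)

section
variable {L : List ℤ}

lemma cfNumDen_fst_pos_and_snd_nonneg (hL : ∀ x ∈ L, 0 < x) :
    0 < (cfNumDen L).1 ∧ 0 ≤ (cfNumDen L).2 := by
  induction L with
  | nil => simp [cfNumDen]
  | cons x l ih =>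
    obtain ⟨hnum, hden⟩ := ih fun y hy => hL y (List.mem_cons_of_mem x hy)
    exact ⟨add_pos_of_pos_of_nonneg (mul_pos (hL x List.mem_cons_self) hnum) hden, hnum.le⟩

lemma cfNumDen_snd_pos (hne : L ≠ []) (hL : ∀ x ∈ L, 0 < x) : 0 < (cfNumDen L).2 := by
  obtain ⟨x, l, rfl⟩ := List.exists_cons_of_ne_nil hne
  exact (cfNumDen_fst_pos_and_snd_nonneg fun y hy => hL y (List.mem_cons_of_mem x hy)).1

lemma cf_eq_cfNumDen_div (hL : ∀ x ∈ L, 0 < x) :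
    cf L = (cfNumDen L).1 / (cfNumDen L).2 := by
  induction L with
  | nil => simp [cf, cfNumDen]
  | cons x l ih =>
    have hl : ∀ y ∈ l, 0 < y := fun y hy => hL y (List.mem_cons_of_mem x hy)
    have hnum : ((cfNumDen l).1 : ℚ) ≠ 0 := by
      exact_mod_cast (cfNumDen_fst_pos_and_snd_nonneg hl).1.ne'
    rw [cf, ih hl, cfNumDen, inv_div]
    push_cast
    field_simp

end

/-- The column of `Ω (altG b L)` that carries `cf L` is the first or the second one according
to the parity of the number of factors. -/
def parityVec (n : ℕ) : Fin 2 → ℤ := if Odd n then ![1, 0] else ![0, 1]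

lemma parityVec_add_two (n : ℕ) : parityVec (n + 1 + 1) = parityVec n := by
  simp [parityVec, Nat.odd_add_one]

lemma altG_mulVec_parityVec (Ω : G →* SL2Z) (ha : Ω ga = matA) (hb : Ω gb = matB)
    (L : List ℤ) :
    (Ω (altG false L) : Matrix (Fin 2) (Fin 2) ℤ) *ᵥ parityVec L.length =
        ![(cfNumDen L).2, (cfNumDen L).1] ∧
      (Ω (altG true L) : Matrix (Fin 2) (Fin 2) ℤ) *ᵥ parityVec (L.length + 1) =
        ![(cfNumDen L).1, (cfNumDen L).2] := by
  induction L with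
  | nil => simp [altG, parityVec, cfNumDen]
  | cons x l ih =>
    constructor
    · rw [altG, map_mul, map_zpow, ha, coe_mul, ← Matrix.mulVec_mulVec, List.length_cons, ih.2,
        coe_matA_zpow, Matrix.mulVec_fin_two]
      simp [cfNumDen]
    · rw [altG, map_mul, map_zpow, hb, coe_mul, ← Matrix.mulVec_mulVec, List.length_cons,
        parityVec_add_two, ih.1, coe_matB_zpow, Matrix.mulVec_fin_two]
      simp [cfNumDen, add_comm]

lemma ψpq_col_zero (Ω : G →* SL2Z) (ha : Ω ga = matA) (hb : Ω gb = matB) (L : List ℤ) :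
    (Ω (ψpq L) : Matrix (Fin 2) (Fin 2) ℤ) 0 0 = (cfNumDen L).2 ∧
      (Ω (ψpq L) : Matrix (Fin 2) (Fin 2) ℤ) 1 0 = (cfNumDen L).1 := by
  suffices h : (Ω (ψpq L) : Matrix (Fin 2) (Fin 2) ℤ) *ᵥ ![1, 0] =
      ![(cfNumDen L).2, (cfNumDen L).1] by
    simpa using h
  have hcol := (altG_mulVec_parityVec Ω ha hb L).1
  unfold ψpq parityVec at *
  split_ifs at * with hodd
  · exact hcol
  · have hS : Ω (gb * ga * gb) = S := by
      ext i j
      rw [map_mul, map_mul, ha, hb, coe_mul, coe_mul]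
      fin_cases i <;> fin_cases j <;> simp [matA, matB]
    rw [map_mul, coe_mul, ← Matrix.mulVec_mulVec, hS, ← hcol]
    simp

lemma SL2Z.exists_eq_mul_T_zpow {P M : SL2Z} (h0 : P 0 0 = M 0 0) (h1 : P 1 0 = M 1 0) :
    ∃ n : ℤ, M = P * T ^ n := by
  set N := P⁻¹ * M with hN
  have hdetP := P.det_coe
  rw [Matrix.det_fin_two] at hdetP
  have hN00 : N 0 0 = 1 := by
    simp [hN, coe_inv, Matrix.adjugate_fin_two, Matrix.mul_apply, ← h0, ← h1]; linarith
  have hN10 : N 1 0 = 0 := by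
    simp [hN, coe_inv, Matrix.adjugate_fin_two, Matrix.mul_apply, ← h0, ← h1]; ring
  have hN11 : N 1 1 = 1 := by
    have := N.det_coe; rw [Matrix.det_fin_two, hN00, hN10] at this; linarith
  refine ⟨N 0 1, ?_⟩
  have hNT : N = T ^ N 0 1 := by
    ext i j; fin_cases i <;> fin_cases j <;> simp [coe_T_zpow, hN00, hN10, hN11]
  rw [← hNT, hN, mul_inv_cancel_left]

lemma MonoidHom.exists_mem_ker_mul_eq_mul_mem_ker {G H : Type*} [Group G] [Group H]
    (f : G →* H) {x y : G} (h : f x = f y) :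
    ∃ k ∈ f.ker, ∃ k' ∈ f.ker, x = k * y ∧ x = y * k' := by
  refine ⟨x * y⁻¹, ?_, y⁻¹ * x, (f.eq_iff).mp h, by group, by group⟩
  rw [f.mem_ker, map_mul, map_inv, h, mul_inv_cancel]

theorem stmt7_general (p q : ℤ) (hq : 0 < q) (hcop : Int.gcd p q = 1)
    (L : List ℤ) (hne : L ≠ []) (hpos : ∀ x ∈ L, 0 < x)
    (hcf : (p : ℚ) / q = cf L)
    (Ω : G →* SL2Z) (ha : Ω ga = matA) (hb : Ω gb = matB) :
    ∀ ψ : G, (Ω ψ : Matrix (Fin 2) (Fin 2) ℤ) 0 0 = q →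
      (Ω ψ : Matrix (Fin 2) (Fin 2) ℤ) 1 0 = p →
      ∃ c₀ : ℤ, ∃ ψ' ∈ Ω.ker, ∃ ψ'' ∈ Ω.ker,
        ψ * (gb ^ c₀)⁻¹ = ψ' * ψpq L ∧ ψ * (gb ^ c₀)⁻¹ = ψpq L * ψ'' := by
  intro ψ h00 h10
  obtain ⟨hM00, hM10⟩ := ψpq_col_zero Ω ha hb L
  obtain ⟨hnum, hden⟩ : (cfNumDen L).1 = p ∧ (cfNumDen L).2 = q := by
    refine Rat.div_int_inj (cfNumDen_snd_pos hne hpos) hq ?_ hcop ?_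
    · refine Int.isCoprime_iff_gcd_eq_one.mp ?_
      rw [← hM00, ← hM10]
      exact (isCoprime_col _ 0).symm
    · rw [← cf_eq_cfNumDen_div hpos, hcf]
  obtain ⟨n, hn⟩ := SL2Z.exists_eq_mul_T_zpow (P := Ω ψ) (M := Ω (ψpq L))
    (by rw [h00, hM00, hden]) (by rw [h10, hM10, hnum])
  refine ⟨n, Ω.exists_mem_ker_mul_eq_mul_mem_ker ?_⟩
  rw [map_mul, map_inv, map_zpow, hb, matB_eq_T_inv, inv_zpow, inv_inv, hn]

theorem stmt7 (p q : ℤ) (hq : 0 < q) (hqp : q < p) (hcop : Int.gcd p q = 1)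
    (L : List ℤ) (hne : L ≠ []) (hpos : ∀ x ∈ L, 0 < x)
    -- the continued fraction expansion produced by the Euclidean algorithm
    -- is precisely the one with positive coefficients whose last
    -- coefficient is at least 2:
    (hlast : 2 ≤ L.getLast hne)
    (hcf : (p : ℚ) / q = cf L)
    (Ω : G →* SL2Z) (ha : Ω ga = matA) (hb : Ω gb = matB) (hc : Ω gc = matB) :
    ∀ ψ : G, (Ω ψ : Matrix (Fin 2) (Fin 2) ℤ) 0 0 = q →
      (Ω ψ : Matrix (Fin 2) (Fin 2) ℤ) 1 0 = p →
      ∃ c₀ : ℤ, ∃ ψ' ∈ Ω.ker, ∃ ψ'' ∈ Ω.ker,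
        ψ * (gb ^ c₀)⁻¹ = ψ' * ψpq L ∧ ψ * (gb ^ c₀)⁻¹ = ψpq L * ψ'' :=
  stmt7_general p q hq hcop L hne hpos hcf Ω ha hb
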